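/- Every simple series-parallel matroid of rank k on a ground set of size 2k−1, with k ≥ 2, is obtained from a simple series-parallel matroid of rank k−1 on a ground set of size 2k−3 by performing one parallel extension followed by one series extension. -/

import Mathlib

open Matroid Set Polynomial

variable {α β : Type*}

/-- Rank of a set in a matroid: size of the largest independent subset. -/
noncomputable def Matroid.rkSet (M : Matroid α) (X : Set α) : ℕ :=
  sSup {n | ∃ I, M.Indep I ∧ I ⊆ X ∧ I.ncard = n}

/-- Rank of a matroid. -/
noncomputable def Matroid.rank (M : Matroid α) : ℕ := M.rkSet M.E

/-- Deletion of a set. -/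
def Matroid.del (M : Matroid α) (D : Set α) : Matroid α := M ↾ (M.E \ D)

/-- Contraction of a set, defined by duality. -/
def Matroid.ctr (M : Matroid α) (C : Set α) : Matroid α := ((M✶).del C)✶

/-- A circuit: a minimal dependent set. -/
def Matroid.IsCct (M : Matroid α) (C : Set α) : Prop :=
  C ⊆ M.E ∧ ¬ M.Indep C ∧ ∀ x ∈ C, M.Indep (C \ {x})

/-- A cocircuit: a circuit of the dual. -/
def Matroid.IsCocct (M : Matroid α) (C : Set α) : Prop := (M✶).IsCct C

/-- A loopless matroid. -/
def Matroid.Loopless' (M : Matroid α) : Prop := ∀ e ∈ M.E, M.Indep {e}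

/-- A simple matroid: loopless and no 2-element circuits. -/
def Matroid.Simple' (M : Matroid α) : Prop :=
  M.Loopless' ∧ ∀ e ∈ M.E, ∀ f ∈ M.E, e ≠ f → M.Indep {e, f}

/-- `M'` is a parallel extension of `M`. -/
def Matroid.IsParallelExt (M M' : Matroid α) : Prop :=
  ∃ e C, e ∈ M'.E ∧ M'.IsCct C ∧ C.ncard = 2 ∧ e ∈ C ∧ M'.del {e} = M

/-- `M'` is a series extension of `M`. -/
def Matroid.IsSeriesExt (M M' : Matroid α) : Prop :=
  ∃ e C, e ∈ M'.E ∧ M'.IsCocct C ∧ C.ncard = 2 ∧ e ∈ C ∧ M'.ctr {e} = M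

/-- Series-parallel matroids: generated from a single loop or coloop by
series and parallel extensions. -/
inductive Matroid.IsSeriesParallel : Matroid α → Prop
  | loop (e : α) : Matroid.IsSeriesParallel (Matroid.loopyOn {e})
  | coloop (e : α) : Matroid.IsSeriesParallel (Matroid.freeOn {e})
  | parallel {M M' : Matroid α} : Matroid.IsSeriesParallel M →
      M.IsParallelExt M' → Matroid.IsSeriesParallel M'
  | series {M M' : Matroid α} : Matroid.IsSeriesParallel M →
      M.IsSeriesExt M' → Matroid.IsSeriesParallel M'

/-- `N` is a minor of `M`. -/
def Matroid.IsMinorOf (N M : Matroid α) : Prop :=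
  ∃ C D, C ⊆ M.E ∧ D ⊆ M.E ∧ N = (M.ctr C).del D

/-- Isomorphism of matroids on possibly different types. -/
def Matroid.IsIsoTo (M : Matroid α) (N : Matroid β) : Prop :=
  ∃ f : α → β, Set.BijOn f M.E N.E ∧ ∀ I ⊆ M.E, (M.Indep I ↔ N.Indep (f '' I))

/-- `N` is (isomorphic to) the uniform matroid `U_{2,4}`. -/
def Matroid.IsU24 (N : Matroid β) : Prop :=
  N.E.ncard = 4 ∧ ∀ I ⊆ N.E, (N.Indep I ↔ I.ncard ≤ 2)

/-- `N` is (isomorphic to) the cycle matroid of the complete graph `K₄`. -/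
def Matroid.IsMK4 (N : Matroid β) : Prop :=
  ∃ f : β → Sym2 (Fin 4), Set.BijOn f N.E {e : Sym2 (Fin 4) | ¬ e.IsDiag} ∧
    ∀ I ⊆ N.E, (N.Indep I ↔ (SimpleGraph.fromEdgeSet (f '' I)).IsAcyclic)

/-- A quasi series-parallel matroid: no `U_{2,4}`- or `M(K₄)`-minor. -/
def Matroid.IsQuasiSP (M : Matroid α) : Prop :=
  ¬ ∃ N : Matroid α, N.IsMinorOf M ∧ (N.IsU24 ∨ N.IsMK4)

/-- One step of the connectivity relation: lying on a common circuit. -/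
def Matroid.ConnStep (M : Matroid α) (e f : α) : Prop :=
  ∃ C, M.IsCct C ∧ e ∈ C ∧ f ∈ C

/-- The connected component of `e` in `M`. -/
def Matroid.comp (M : Matroid α) (e : α) : Set α :=
  {f ∈ M.E | Relation.ReflTransGen M.ConnStep e f}

/-- A connected matroid. -/
def Matroid.IsConnected' (M : Matroid α) : Prop :=
  M.E.Nonempty ∧ ∀ e ∈ M.E, ∀ f ∈ M.E, Relation.ReflTransGen M.ConnStep e f

/-- A polynomial is palindromic of degree `d`. -/
def IsPalindromic (d : ℕ) {R : Type*} [Semiring R] (p : Polynomial R) : Prop :=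
  p.natDegree = d ∧ ∀ i ≤ d, p.coeff i = p.coeff (d - i)

/-- The defining axioms of the (non-equivariant) Kazhdan–Lusztig polynomial of
matroids, for an assignment `P` of a polynomial to every matroid on `α`. -/
def IsKLAssignment (P : Matroid α → Polynomial ℤ) : Prop :=
  (∀ M : Matroid α, M.Finite → M.Loopless' → M.rank = 0 → P M = 1) ∧
  (∀ M : Matroid α, M.Finite → M.Loopless' → 0 < M.rank →
      2 * (P M).natDegree < M.rank) ∧
  (∀ M : Matroid α, M.Finite → M.Loopless' →
      IsPalindromic M.rank (∑ᶠ F ∈ {F | M.IsFlat F}, X ^ (M.rkSet F) * P (M.ctr F)))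

/-- The `Z`-polynomial associated to an assignment `P`. -/
noncomputable def ZPoly (P : Matroid α → Polynomial ℤ) (M : Matroid α) : Polynomial ℤ :=
  ∑ᶠ F ∈ {F | M.IsFlat F}, X ^ (M.rkSet F) * P (M.ctr F)

/-- The braid matroid on `n` vertices: the cycle matroid of the complete graph `Kₙ`,
with ground set the set of non-diagonal elements of `Sym2 (Fin n)`. -/
def IsBraid (n : ℕ) (B : Matroid (Sym2 (Fin n))) : Prop :=
  B.E = {e : Sym2 (Fin n) | ¬ e.IsDiag} ∧
  ∀ I ⊆ B.E, (B.Indep I ↔ (SimpleGraph.fromEdgeSet I).IsAcyclic)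

/-- Stirling numbers of the second kind. -/
def stirling2 : ℕ → ℕ → ℕ
  | 0, 0 => 1
  | 0, _ + 1 => 0
  | _ + 1, 0 => 0
  | n + 1, k + 1 => (k + 1) * stirling2 n (k + 1) + stirling2 n k

/-- A triangular cactus: a connected graph in which every edge lies in a (unique)
cycle, and every cycle is a triangle. -/
def IsTriangularCactus {V : Type*} (G : SimpleGraph V) : Prop :=
  G.Connected ∧
  (∀ e ∈ G.edgeSet, ∃ (v : V) (w : G.Walk v v), w.IsCycle ∧ w.length = 3 ∧ e ∈ w.edges) ∧
  (∀ (v : V) (w : G.Walk v v), w.IsCycle → w.length = 3)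

/-!
Apart from a single coloop, a simple series-parallel matroid `M` arises by a series extension:
`M ／ {e} = N` for a series pair `{e, g}`, with `N` series-parallel. As `M` is simple, every circuit
of `N` with at most two elements is a parallel pair `{w, g}` through `g`. If `N` is not simple, one
element `z` of such a pair can be deleted so that `N ＼ {z}` is still series-parallel (an induction
along the construction of `N`, where the freedom to choose `z` avoids relabelling elements), and
`N ＼ {z}` is simple. By induction this gives `|E| < 2 r` for every simple series-parallel matroid;
so when `|E(M)| = 2 r(M) - 1`, the matroid `N` is not simple and `N ＼ {z}` is the required `M₀`.
-/

lemma Set.exists_eq_pair_of_ncard_eq_two {α : Type*} {C : Set α} {e : α} (hC : C.ncard = 2)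
    (heC : e ∈ C) : ∃ f, e ≠ f ∧ C = {e, f} := by
  obtain ⟨x, y, hxy, rfl⟩ := ncard_eq_two.1 hC
  obtain rfl | rfl := heC
  · exact ⟨y, hxy, rfl⟩
  · exact ⟨x, hxy.symm, pair_comm _ _⟩

namespace Matroid

variable {α : Type*} {M N : Matroid α} {B C K : Set α} {a b c e f g w z : α}

@[simp] lemma del_eq_delete (M : Matroid α) (D : Set α) : M.del D = M ＼ D := rfl

@[simp] lemma ctr_eq_contract (M : Matroid α) (C : Set α) : M.ctr C = M ／ C := rfl

@[simp] lemma isCct_iff_isCircuit : M.IsCct C ↔ M.IsCircuit C := by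
  rw [isCircuit_iff_dep_forall_sdiff_singleton_indep, Dep, IsCct]
  tauto

@[simp] lemma isCocct_iff_isCocircuit : M.IsCocct K ↔ M.IsCocircuit K :=
  isCct_iff_isCircuit

lemma isParallelExt_iff :
    N.IsParallelExt M ↔ ∃ e f, e ≠ f ∧ M.IsCircuit {e, f} ∧ M ＼ {e} = N := by
  simp only [IsParallelExt, isCct_iff_isCircuit, del_eq_delete]
  constructor
  · rintro ⟨e, C, -, hC, hC2, heC, rfl⟩
    obtain ⟨f, hef, rfl⟩ := exists_eq_pair_of_ncard_eq_two hC2 heC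
    exact ⟨e, f, hef, hC, rfl⟩
  · rintro ⟨e, f, hef, hC, rfl⟩
    exact ⟨e, {e, f}, hC.subset_ground (mem_insert e _), hC, ncard_pair hef, mem_insert e _, rfl⟩

lemma isSeriesExt_iff :
    N.IsSeriesExt M ↔ ∃ e f, e ≠ f ∧ M.IsCocircuit {e, f} ∧ M ／ {e} = N := by
  simp only [IsSeriesExt, isCocct_iff_isCocircuit, ctr_eq_contract]
  constructor
  · rintro ⟨e, K, -, hK, hK2, heK, rfl⟩
    obtain ⟨f, hef, rfl⟩ := exists_eq_pair_of_ncard_eq_two hK2 heK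
    exact ⟨e, f, hef, hK, rfl⟩
  · rintro ⟨e, f, hef, hK, rfl⟩
    exact ⟨e, {e, f}, hK.subset_ground (mem_insert e _), hK, ncard_pair hef, mem_insert e _, rfl⟩

lemma simple'_iff_forall_isCircuit : M.Simple' ↔ ∀ C, M.IsCircuit C → 2 < C.encard := by
  refine ⟨fun ⟨hl, hp⟩ C hC ↦ ?_, fun h ↦ ⟨fun e he ↦ ?_, fun e he f hf hef ↦ ?_⟩⟩
  · by_contra! hC2
    obtain ⟨x, hxC⟩ := hC.nonempty
    obtain rfl | hnt := C.eq_singleton_or_nontrivial hxC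
    · exact hC.not_indep (hl x (hC.subset_ground hxC))
    obtain ⟨x, y, hxy, hxyC⟩ := hnt.pair_subset
    obtain rfl := (toFinite {x, y}).eq_of_subset_of_encard_le hxyC (by rwa [encard_pair hxy])
    exact hC.not_indep (hp x (hC.subset_ground (mem_insert x _)) y
      (hC.subset_ground (mem_insert_of_mem x rfl)) hxy)
  all_goals
    by_contra hd
    obtain ⟨C, hCX, hC⟩ := (Dep.exists_isCircuit_subset ⟨hd, by grind⟩)
    exact (h C hC).not_ge ((encard_le_encard hCX).trans (by simp [encard_pair, *]))

lemma IsBase.rank_eq [M.RankFinite] (hB : M.IsBase B) : M.rank = B.ncard := by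
  refine IsGreatest.csSup_eq ⟨⟨B, hB.indep, hB.subset_ground, rfl⟩, ?_⟩
  rintro _ ⟨I, hI, -, rfl⟩
  obtain ⟨B', hB', hIB'⟩ := hI.exists_isBase_superset
  exact (ncard_le_ncard hIB' hB'.finite).trans (hB'.ncard_eq_ncard_of_isBase hB).le

lemma IsParallelExt.rank_eq [M.RankFinite] (h : N.IsParallelExt M) : N.rank = M.rank := by
  obtain ⟨e, f, hef, hC, rfl⟩ := isParallelExt_iff.1 h
  have hf : M.IsNonloop f := hC.isNonloop_of_mem (nontrivial_pair hef) (mem_insert_of_mem e rfl)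
  obtain ⟨B, hB, hfB⟩ := hf.indep.exists_isBase_superset
  have heB : e ∉ B := fun heB ↦
    hC.not_indep (hB.indep.subset (pair_subset heB (singleton_subset_iff.1 hfB)))
  have hBe : (M ＼ {e}).IsBase B := delete_isBase_iff.2 <|
    hB.isBasis_ground.isBasis_subset (subset_sdiff_singleton hB.subset_ground heB) sdiff_subset
  rw [hBe.rank_eq, hB.rank_eq]

lemma IsSeriesExt.rank_add_one [M.RankFinite] (h : N.IsSeriesExt M) : N.rank + 1 = M.rank := by
  obtain ⟨e, f, -, hK, rfl⟩ := isSeriesExt_iff.1 h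
  have he : M.IsNonloop e := hK.isNonloop_of_mem (mem_insert e _)
  obtain ⟨B, hB, heB⟩ := he.indep.exists_isBase_superset
  have hBe : (M ／ {e}).IsBase (B \ {e}) := he.indep.contract_isBase_iff.2
    ⟨by rwa [sdiff_union_self, union_eq_left.2 heB], disjoint_sdiff_left⟩
  rw [hBe.rank_eq, hB.rank_eq, ncard_sdiff_singleton_add_one (heB rfl) hB.finite]

lemma IsParallelExt.ncard_add_one (hE : M.E.Finite) (h : N.IsParallelExt M) :
    N.E.ncard + 1 = M.E.ncard := by
  obtain ⟨e, f, -, hC, rfl⟩ := isParallelExt_iff.1 h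
  exact ncard_sdiff_singleton_add_one (hC.subset_ground (mem_insert e _)) hE

lemma IsSeriesExt.ncard_add_one (hE : M.E.Finite) (h : N.IsSeriesExt M) :
    N.E.ncard + 1 = M.E.ncard := by
  obtain ⟨e, f, -, hK, rfl⟩ := isSeriesExt_iff.1 h
  exact ncard_sdiff_singleton_add_one (hK.subset_ground (mem_insert e _)) hE

lemma IsCircuit.mem_of_mem_isCocircuit_pair (hC : M.IsCircuit C) (hK : M.IsCocircuit {e, g})
    (heC : e ∈ C) : g ∈ C := by
  by_contra hgC
  refine hC.inter_isCocircuit_ne_singleton hK (e := e) ?_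
  ext x
  simp only [mem_inter_iff, mem_insert_iff, mem_singleton_iff]
  grind

lemma isCircuit_pair_trans (hab : M.IsCircuit {a, b}) (hbc : M.IsCircuit {b, c})
    (hac : a ≠ c) : M.IsCircuit {a, c} := by
  obtain rfl | hab' := eq_or_ne a b
  · exact hbc
  obtain rfl | hbc' := eq_or_ne b c
  · exact hab
  have ha := hab.isNonloop_of_mem (nontrivial_pair hab') (mem_insert a _)
  have hb := hbc.isNonloop_of_mem (nontrivial_pair hbc') (mem_insert b _)
  rw [← ha.closure_eq_closure_iff_isCircuit_of_ne hac,
    (ha.closure_eq_closure_iff_isCircuit_of_ne hab').2 hab,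
    (hb.closure_eq_closure_iff_isCircuit_of_ne hbc').2 hbc]

lemma IsCocircuit.contract_isCircuit_iff (hK : M.IsCocircuit {e, g}) (heg : e ≠ g)
    (hgC : g ∉ C) : (M ／ {e}).IsCircuit C ↔ M.IsCircuit C := by
  have hcontr : ∀ ⦃D⦄, (M ／ {e}).IsCircuit D → g ∉ D → M.IsCircuit D := by
    intro D hD hgD
    obtain ⟨D', hD', hDD', hD'D⟩ := hD.exists_subset_isCircuit_of_contract
    have hgD' : g ∉ D' := fun hg ↦ (hD'D hg).elim hgD (Ne.symm heg)
    have heD' : e ∉ D' := fun he ↦ hgD' (hD'.mem_of_mem_isCocircuit_pair hK he)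
    rwa [← subset_antisymm (fun x hx ↦ (hD'D hx).resolve_right (by grind)) hDD']
  refine ⟨fun hC ↦ hcontr hC hgC, fun hC ↦ ?_⟩
  have heC : e ∉ C := fun he ↦ hgC (hC.mem_of_mem_isCocircuit_pair hK he)
  obtain ⟨D, hDC, hD⟩ := (hC.contract_dep (disjoint_singleton_left.2 heC)).exists_isCircuit_subset
  rwa [← (hcontr hD fun hg ↦ hgC (hDC hg)).eq_of_subset_isCircuit hC hDC]

lemma IsSeriesParallel.of_delete (h : (M ＼ {e}).IsSeriesParallel) (hef : e ≠ f)
    (hC : M.IsCircuit {e, f}) : M.IsSeriesParallel :=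
  .parallel h (isParallelExt_iff.2 ⟨e, f, hef, hC, rfl⟩)

lemma IsSeriesParallel.of_contract (h : (M ／ {e}).IsSeriesParallel) (hef : e ≠ f)
    (hK : M.IsCocircuit {e, f}) : M.IsSeriesParallel :=
  .series h (isSeriesExt_iff.2 ⟨e, f, hef, hK, rfl⟩)

@[elab_as_elim]
theorem IsSeriesParallel.delete_contract_induction
    {P : ∀ M : Matroid α, M.IsSeriesParallel → Prop}
    (loop : ∀ e, P (loopyOn {e}) (.loop e)) (coloop : ∀ e, P (freeOn {e}) (.coloop e))
    (parallel : ∀ ⦃M : Matroid α⦄ ⦃e f : α⦄ (hef : e ≠ f) (hC : M.IsCircuit {e, f})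
      (h : (M ＼ {e}).IsSeriesParallel), P _ h → P M (h.of_delete hef hC))
    (series : ∀ ⦃M : Matroid α⦄ ⦃e f : α⦄ (hef : e ≠ f) (hK : M.IsCocircuit {e, f})
      (h : (M ／ {e}).IsSeriesParallel), P _ h → P M (h.of_contract hef hK)) :
    ∀ M h, P M h := by
  intro M h
  induction h with
  | loop e => exact loop e
  | coloop e => exact coloop e
  | parallel h hext ih =>
    obtain ⟨e, f, hef, hC, rfl⟩ := isParallelExt_iff.1 hext
    exact parallel hef hC h ih
  | series h hext ih =>
    obtain ⟨e, f, hef, hK, rfl⟩ := isSeriesExt_iff.1 hext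
    exact series hef hK h ih

lemma IsSeriesParallel.finite (h : M.IsSeriesParallel) : M.Finite := by
  induction M, h using IsSeriesParallel.delete_contract_induction with
  | loop e => exact ⟨finite_singleton e⟩
  | coloop e => exact ⟨finite_singleton e⟩
  | @parallel M e _ _ _ _ ih | @series M e _ _ _ _ ih =>
    exact ⟨(ih.ground_finite.insert e).subset (subset_insert_sdiff_singleton e M.E)⟩

lemma IsSeriesParallel.ground_eq_singleton_of_isLoop (h : M.IsSeriesParallel)
    (hg : M.IsLoop g) : M.E = {g} := by
  induction M, h using IsSeriesParallel.delete_contract_induction with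
  | loop e => rw [loopyOn_isLoop_iff.1 hg, loopyOn_ground]
  | coloop e => exact (freeOn_not_isLoop _ _ hg).elim
  | @parallel M e f hef hC _ ih =>
    have hge : g ≠ e := fun hge ↦ (hC.isNonloop_of_mem (nontrivial_pair hef)
      (mem_insert e _)).not_isLoop (hge ▸ hg)
    have hf : f ∈ (M ＼ {e}).E := ⟨hC.subset_ground (mem_insert_of_mem e rfl), hef.symm⟩
    rw [ih (delete_isLoop_iff.2 ⟨hg, hge⟩), mem_singleton_iff] at hf
    exact ((hC.isNonloop_of_mem (nontrivial_pair hef) (mem_insert_of_mem e rfl)).not_isLoop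
      (hf ▸ hg)).elim
  | @series M e f hef hK _ ih =>
    have hge : g ≠ e := fun hge ↦ (hK.isNonloop_of_mem (mem_insert e _)).not_isLoop (hge ▸ hg)
    have hf : f ∈ (M ／ {e}).E := ⟨hK.subset_ground (mem_insert_of_mem e rfl), hef.symm⟩
    rw [ih (contract_isLoop_iff_mem_closure.2 ⟨hg.mem_closure _, hge⟩), mem_singleton_iff] at hf
    exact ((hK.isNonloop_of_mem (mem_insert_of_mem e rfl)).not_isLoop (hf ▸ hg)).elim

lemma IsSeriesParallel.delete_of_delete_delete (h : (M ＼ {e} ＼ {z}).IsSeriesParallel)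
    (hC : M.IsCircuit {e, f}) (hef : e ≠ f) (hD : M.IsCircuit {z, w}) (hzw : z ≠ w)
    (hez : e ∉ ({z, w} : Set α)) : (M ＼ {z}).IsSeriesParallel := by
  obtain ⟨f', hef', hC', hf'z⟩ : ∃ f', e ≠ f' ∧ M.IsCircuit {e, f'} ∧ f' ≠ z := by
    obtain rfl | hfz := eq_or_ne f z
    · have hew : e ≠ w := fun h ↦ hez (h ▸ mem_insert_of_mem f rfl)
      exact ⟨w, hew, isCircuit_pair_trans hC hD hew, hzw.symm⟩
    · exact ⟨f, hef, hC, hfz⟩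
  refine IsSeriesParallel.of_delete (by rwa [delete_comm]) hef'
    (delete_isCircuit_iff.2 ⟨hC', ?_⟩)
  simp only [disjoint_singleton_right, mem_insert_iff, mem_singleton_iff, not_or]
  exact ⟨fun h ↦ hez (h ▸ mem_insert _ _), hf'z.symm⟩

lemma IsSeriesParallel.delete_of_contract_delete (h : (M ／ {e} ＼ {z}).IsSeriesParallel)
    (hK : M.IsCocircuit {e, f}) (hef : e ≠ f) (hD : M.IsCircuit {z, w}) (hzw : z ≠ w)
    (hez : e ∉ ({z, w} : Set α)) : (M ＼ {z}).IsSeriesParallel := by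
  have hfz : f ∉ ({z, w} : Set α) := fun hf ↦
    hez (hD.mem_of_mem_isCocircuit_pair (pair_comm e f ▸ hK) hf)
  have hKz : (M ＼ {z}).IsCocircuit {e, f} := by
    -- `{z, w}` is a series pair of `M✶`, and `(M ＼ {z})✶ = M✶ ／ {z}`
    rw [isCocircuit_def, dual_delete,
      hD.isCocircuit.contract_isCircuit_iff hzw (by grind)]
    exact hK
  exact .of_contract (by rwa [← contract_delete_comm _ (by simp_all)]) hef hKz

lemma IsSeriesParallel.exists_delete_isSeriesParallel (h : M.IsSeriesParallel) (hab : a ≠ b)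
    (hC : M.IsCircuit {a, b}) : ∃ z ∈ ({a, b} : Set α), (M ＼ {z}).IsSeriesParallel := by
  induction M, h using IsSeriesParallel.delete_contract_induction generalizing a b with
  | loop e | coloop e =>
    have := hC.subset_ground
    simp only [loopyOn_ground, freeOn_ground, pair_subset_iff, mem_singleton_iff] at this
    exact (hab (this.1.trans this.2.symm)).elim
  | @parallel M e f hef hCef hsp ih =>
    by_cases he : e ∈ ({a, b} : Set α)
    · exact ⟨e, he, hsp⟩
    obtain ⟨z, hz, hzsp⟩ := ih hab (delete_isCircuit_iff.2 ⟨hC, disjoint_singleton_right.2 he⟩)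
    refine ⟨z, hz, ?_⟩
    obtain rfl | rfl := hz
    · exact hzsp.delete_of_delete_delete hCef hef hC hab he
    · rw [pair_comm] at hC he
      exact hzsp.delete_of_delete_delete hCef hef hC hab.symm he
  | @series M e f hef hK hsp ih =>
    by_cases he : e ∈ ({a, b} : Set α)
    · have hf := hC.mem_of_mem_isCocircuit_pair hK he
      have hab_ef : ({a, b} : Set α) = {e, f} := by grind
      rw [hab_ef] at hC
      have hfl : (M ／ {e}).IsLoop f := by
        simpa [pair_sdiff_left hef] using
          hC.contractElem_isCircuit (nontrivial_pair hef) (mem_insert e _)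
      have hEf := hsp.ground_eq_singleton_of_isLoop hfl
      have hfe : M.Indep {f} :=
        (hC.isNonloop_of_mem (nontrivial_pair hef) (mem_insert_of_mem e rfl)).indep
      refine ⟨e, he, ?_⟩
      rw [(eq_freeOn_iff (M := M ＼ {e})).2
        ⟨hEf, delete_indep_iff.2 ⟨hfe, disjoint_singleton.2 hef.symm⟩⟩]
      exact .coloop f
    have hf : f ∉ ({a, b} : Set α) := fun hf ↦
      he (hC.mem_of_mem_isCocircuit_pair (pair_comm e f ▸ hK) hf)
    obtain ⟨z, hz, hzsp⟩ := ih hab ((hK.contract_isCircuit_iff hef hf).2 hC)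
    refine ⟨z, hz, ?_⟩
    obtain rfl | rfl := hz
    · exact hzsp.delete_of_contract_delete hK hef hC hab he
    · rw [pair_comm] at hC he
      exact hzsp.delete_of_contract_delete hK hef hC hab.symm he

section SeriesPair

variable (hs : M.Simple') (hK : M.IsCocircuit {e, g}) (heg : e ≠ g)
include hs hK heg

lemma Simple'.exists_eq_pair_of_contract_isCircuit (hC : (M ／ {e}).IsCircuit C)
    (hC2 : C.encard ≤ 2) : ∃ w, w ≠ g ∧ C = {w, g} := by
  rw [simple'_iff_forall_isCircuit] at hs
  have hgC : g ∈ C := by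
    by_contra hgC
    exact (hs C ((hK.contract_isCircuit_iff heg hgC).1 hC)).not_ge hC2
  obtain ⟨C', hC', -, hC'C⟩ := hC.exists_subset_isCircuit_of_contract
  have h2C : 2 ≤ C.encard := by
    have := (hs C' hC').trans_le ((encard_le_encard hC'C).trans (encard_union_le C {e}))
    rwa [encard_singleton, ENat.lt_add_one_iff (hC2.trans_lt (by decide)).ne] at this
  obtain ⟨x, y, hxy, rfl⟩ := encard_eq_two.1 (hC2.antisymm h2C)
  obtain rfl | rfl := hgC
  · exact ⟨y, hxy.symm, pair_comm _ _⟩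
  · exact ⟨x, hxy, rfl⟩

lemma Simple'.simple'_contract_delete (hC : (M ／ {e}).IsCircuit {w, g}) (hwg : w ≠ g)
    (hz : z ∈ ({w, g} : Set α)) : (M ／ {e} ＼ {z}).Simple' := by
  rw [simple'_iff_forall_isCircuit]
  intro D hD
  by_contra! hD2
  obtain ⟨hDN, hDz⟩ := delete_isCircuit_iff.1 hD
  obtain ⟨p, hpg, rfl⟩ := hs.exists_eq_pair_of_contract_isCircuit hK heg hDN hD2
  obtain rfl : z = w := hz.resolve_right fun hzg ↦ by simp [hzg] at hDz
  have hpz : p ≠ z := fun hpz ↦ by simp [hpz] at hDz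
  have hpw := isCircuit_pair_trans hDN (pair_comm z g ▸ hC) hpz
  obtain ⟨q, -, hq⟩ := hs.exists_eq_pair_of_contract_isCircuit hK heg hpw (encard_pair hpz).le
  have : g ∈ ({p, z} : Set α) := hq ▸ mem_insert_of_mem q rfl
  grind

lemma Simple'.exists_simple'_isParallelExt_contract (hsp : (M ／ {e}).IsSeriesParallel)
    (hns : ¬ (M ／ {e}).Simple') :
    ∃ M₀ : Matroid α, M₀.Simple' ∧ M₀.IsSeriesParallel ∧ M₀.IsParallelExt (M ／ {e}) := by
  obtain ⟨C, hC, hC2⟩ : ∃ C, (M ／ {e}).IsCircuit C ∧ C.encard ≤ 2 := by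
    simpa [simple'_iff_forall_isCircuit] using hns
  obtain ⟨w, hwg, rfl⟩ := hs.exists_eq_pair_of_contract_isCircuit hK heg hC hC2
  obtain ⟨z, hz, hzsp⟩ := hsp.exists_delete_isSeriesParallel hwg hC
  exact ⟨_, hs.simple'_contract_delete hK heg hC hwg hz, hzsp,
    z, {w, g}, hC.subset_ground hz, isCct_iff_isCircuit.2 hC, ncard_pair hwg, hz, rfl⟩

end SeriesPair

lemma IsSeriesParallel.eq_freeOn_or_exists_isCocircuit (h : M.IsSeriesParallel)
    (hs : M.Simple') :
    (∃ x, M = freeOn {x}) ∨ ∃ e g, e ≠ g ∧ M.IsCocircuit {e, g} ∧ (M ／ {e}).IsSeriesParallel := by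
  rw [simple'_iff_forall_isCircuit] at hs
  induction M, h using IsSeriesParallel.delete_contract_induction with
  | loop e =>
    have := hs {e} (singleton_isCircuit.2 (loopyOn_isLoop_iff.2 rfl))
    simp at this
  | coloop e => exact .inl ⟨e, rfl⟩
  | @parallel M e f hef hC => exact ((hs _ hC).ne (encard_pair hef).symm).elim
  | @series M e f hef hK hsp => exact .inr ⟨e, f, hef, hK, hsp⟩

lemma IsSeriesParallel.eq_freeOn_or_exists_isSeriesExt (h : M.IsSeriesParallel)
    (hs : M.Simple') : (∃ x, M = freeOn {x}) ∨ ∃ N, N.IsSeriesParallel ∧ N.IsSeriesExt M ∧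
      (N.Simple' ∨ ∃ M₀ : Matroid α, M₀.Simple' ∧ M₀.IsSeriesParallel ∧ M₀.IsParallelExt N) := by
  obtain hx | ⟨e, g, heg, hK, hN⟩ := h.eq_freeOn_or_exists_isCocircuit hs
  · exact .inl hx
  refine .inr ⟨M ／ {e}, hN, isSeriesExt_iff.2 ⟨e, g, heg, hK, rfl⟩, ?_⟩
  by_cases hNs : (M ／ {e}).Simple'
  · exact .inl hNs
  · exact .inr (hs.exists_simple'_isParallelExt_contract hK heg hN hNs)

theorem IsSeriesParallel.ncard_lt_two_mul_rank (h : M.IsSeriesParallel) (hs : M.Simple') :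
    M.E.ncard < 2 * M.rank := by
  obtain ⟨n, hn⟩ : ∃ n, M.E.ncard = n := ⟨_, rfl⟩
  induction n using Nat.strong_induction_on generalizing M with
  | _ n ih =>
  have := h.finite
  obtain ⟨x, rfl⟩ | ⟨N, hN, hser, hNs | ⟨M₀, hs₀, hsp₀, hpar⟩⟩ :=
    h.eq_freeOn_or_exists_isSeriesExt hs
  · simp [(freeOn_isBase_iff.2 rfl).rank_eq]
  all_goals
    have := hN.finite
    have := hser.rank_add_one
    have := hser.ncard_add_one M.ground_finite
  · have := ih _ (by omega) hN hNs rfl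
    omega
  · have := hpar.rank_eq
    have := hpar.ncard_add_one N.ground_finite
    have := ih _ (by omega) hsp₀ hs₀ rfl
    omega

end Matroid

theorem simple_sp_inductive_structure_general {α : Type*} (k : ℕ) (hk : 2 ≤ k)
    (M : Matroid α) (hs : M.Simple') (hsp : M.IsSeriesParallel)
    (hr : M.rank = k) (hn : M.E.ncard = 2 * k - 1) :
    ∃ M₀ M₁ : Matroid α, M₀.Simple' ∧ M₀.IsSeriesParallel ∧ M₀.rank = k - 1 ∧
      M₀.E.ncard = 2 * k - 3 ∧ M₀.IsParallelExt M₁ ∧ M₁.IsSeriesExt M := by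
  have := hsp.finite
  obtain ⟨x, rfl⟩ | ⟨N, hN, hser, hNs | ⟨M₀, hs₀, hsp₀, hpar⟩⟩ :=
    hsp.eq_freeOn_or_exists_isSeriesExt hs
  · simp at hn
    omega
  all_goals
    have := hN.finite
    have := hser.rank_add_one
    have := hser.ncard_add_one M.ground_finite
  · have := hN.ncard_lt_two_mul_rank hNs
    omega
  · have := hpar.rank_eq
    have := hpar.ncard_add_one N.ground_finite
    exact ⟨M₀, N, hs₀, hsp₀, by omega, by omega, hpar, hser⟩

/-- Every simple series-parallel matroid of rank `k ≥ 2` on a ground set of size `2k - 1`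
is obtained from a simple series-parallel matroid of rank `k - 1` on a ground set of size
`2k - 3` by a parallel extension followed by a series extension. -/
theorem simple_sp_inductive_structure {α : Type*} (k : ℕ) (hk : 2 ≤ k)
    (M : Matroid α) (hfin : M.Finite) (hs : M.Simple') (hsp : M.IsSeriesParallel)
    (hr : M.rank = k) (hn : M.E.ncard = 2 * k - 1) :
    ∃ M₀ M₁ : Matroid α, M₀.Simple' ∧ M₀.IsSeriesParallel ∧ M₀.rank = k - 1 ∧
      M₀.E.ncard = 2 * k - 3 ∧ M₀.IsParallelExt M₁ ∧ M₁.IsSeriesExt M :=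
  simple_sp_inductive_structure_general k hk M hs hsp hr hn
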